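/- With N, G as in the Proposition, N satisfies N = I + (A_0 + A_1 G) N, including the case where both sides diverge. -/

import Mathlib

open scoped ENNReal
open Classical

abbrev Mx := ℕ → ℕ → ℝ≥0∞

noncomputable def mprod (A B : Mx) : Mx := fun i j => ∑' k, A i k * B k j

def isPM1 (L : List ℤ) : Prop := ∀ x ∈ L, x = -1 ∨ x = 0 ∨ x = 1

/-- `I_{D,m,n}` with `n = L.length`. -/
def ID (m : ℕ) (L : List ℤ) : Prop :=
  isPM1 L ∧ (∀ k, 1 ≤ k → k ≤ L.length - 1 → -(m : ℤ) + 1 ≤ (L.take k).sum) ∧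
    L.sum = -(m : ℤ)

/-- `I_n`: partial sums nonnegative and total sum `0`. -/
def IFlat (L : List ℤ) : Prop :=
  isPM1 L ∧ (∀ k, 1 ≤ k → k ≤ L.length - 1 → 0 ≤ (L.take k).sum) ∧ L.sum = 0

/-- `I_{U,1,n}`: partial sums `≥ 1` and total sum `1`. -/
def IU (L : List ℤ) : Prop :=
  isPM1 L ∧ (∀ k, 1 ≤ k → k ≤ L.length - 1 → 1 ≤ (L.take k).sum) ∧ L.sum = 1

/-- The matrix associated with an index in `{-1,0,1}`. -/
noncomputable def pick (Am1 A0 A1 : Mx) (x : ℤ) : Mx :=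
  if x = -1 then Am1 else if x = 0 then A0 else A1

/-- Product `A_{i₁} A_{i₂} ⋯ A_{i_n}` along an index sequence. -/
noncomputable def seqProd (Am1 A0 A1 : Mx) : List ℤ → Mx
  | [] => fun i j => if i = j then 1 else 0
  | x :: L => mprod (pick Am1 A0 A1 x) (seqProd Am1 A0 A1 L)

/-!
Classify the paths of `I_n` by their first step. A path is empty, or a level step followed by a
path of `I_n`, or an up-step followed by the rest; in the last case cutting the rest at its first
return to level `0` splits it uniquely into a path of `I_{D,1}` followed by a path of `I_n`. This
bijection turns `N` into `I + A₀ N + A₁ G N`, and as every sum lives in `[0,∞]` the rearrangements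
need no convergence.
-/

lemma mprod_assoc (A B C : Mx) : mprod (mprod A B) C = mprod A (mprod B C) := by
  funext i j
  unfold mprod
  calc ∑' k, (∑' a, A i a * B a k) * C k j
      = ∑' k, ∑' a, A i a * B a k * C k j := tsum_congr fun k => ENNReal.tsum_mul_right.symm
    _ = ∑' a, ∑' k, A i a * (B a k * C k j) := by
        rw [ENNReal.tsum_comm]; exact tsum_congr fun a => tsum_congr fun k => mul_assoc _ _ _
    _ = ∑' a, A i a * ∑' k, B a k * C k j := tsum_congr fun a => ENNReal.tsum_mul_left

lemma one_mprod (B : Mx) : mprod (fun i j => if i = j then 1 else 0) B = B := by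
  funext i j
  unfold mprod
  rw [tsum_eq_single i fun k hk => by simp [Ne.symm hk]]
  simp

lemma add_mprod (P Q B : Mx) (i j : ℕ) :
    mprod (fun a b => P a b + Q a b) B i j = mprod P B i j + mprod Q B i j := by
  unfold mprod
  rw [← ENNReal.tsum_add]
  exact tsum_congr fun k => add_mul _ _ _

lemma mprod_tsum {ι : Type*} (A : Mx) (F : ι → Mx) (i j : ℕ) :
    mprod A (fun a b => ∑' x, F x a b) i j = ∑' x, mprod A (F x) i j := by
  unfold mprod
  calc ∑' k, A i k * ∑' x, F x k j = ∑' k, ∑' x, A i k * F x k j :=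
        tsum_congr fun k => ENNReal.tsum_mul_left.symm
    _ = ∑' x, ∑' k, A i k * F x k j := ENNReal.tsum_comm

lemma tsum_mprod {ι : Type*} (F : ι → Mx) (B : Mx) (i j : ℕ) :
    mprod (fun a b => ∑' x, F x a b) B i j = ∑' x, mprod (F x) B i j := by
  unfold mprod
  calc ∑' k, (∑' x, F x i k) * B k j = ∑' k, ∑' x, F x i k * B k j :=
        tsum_congr fun k => ENNReal.tsum_mul_right.symm
    _ = ∑' x, ∑' k, F x i k * B k j := ENNReal.tsum_comm

lemma tsum_mprod_tsum {ι κ : Type*} (F : ι → Mx) (H : κ → Mx) (i j : ℕ) :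
    mprod (fun a b => ∑' x, F x a b) (fun a b => ∑' y, H y a b) i j
      = ∑' p : ι × κ, mprod (F p.1) (H p.2) i j := by
  rw [tsum_mprod, ENNReal.tsum_prod']
  exact tsum_congr fun x => mprod_tsum _ _ i j

section Paths

variable (Am1 A0 A1 : Mx)

noncomputable def pathSum (P : List ℤ → Prop) : Mx :=
  fun i j => ∑' L : {L : List ℤ // P L}, seqProd Am1 A0 A1 L.1 i j

lemma seqProd_append (M L : List ℤ) :
    seqProd Am1 A0 A1 (M ++ L) = mprod (seqProd Am1 A0 A1 M) (seqProd Am1 A0 A1 L) := by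
  induction M with
  | nil => exact (one_mprod _).symm
  | cons x M ih => simp only [List.cons_append, seqProd, ih, mprod_assoc]

lemma seqProd_zero_cons (L : List ℤ) :
    seqProd Am1 A0 A1 (0 :: L) = mprod A0 (seqProd Am1 A0 A1 L) := by
  simp [seqProd, pick]

lemma seqProd_one_cons (L : List ℤ) :
    seqProd Am1 A0 A1 (1 :: L) = mprod A1 (seqProd Am1 A0 A1 L) := by
  simp [seqProd, pick]

lemma tsum_seqProd_append (P Q : List ℤ → Prop) :
    (fun i j => ∑' p : {M : List ℤ // P M} × {L : List ℤ // Q L},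
        seqProd Am1 A0 A1 (p.1.1 ++ p.2.1) i j)
      = mprod (pathSum Am1 A0 A1 P) (pathSum Am1 A0 A1 Q) := by
  funext i j
  simp only [seqProd_append]
  exact (tsum_mprod_tsum (fun M : {M // P M} => seqProd Am1 A0 A1 M.1)
    (fun L : {L // Q L} => seqProd Am1 A0 A1 L.1) i j).symm

end Paths

lemma iFlat_iff (L : List ℤ) :
    IFlat L ↔ isPM1 L ∧ (∀ k, 0 ≤ (L.take k).sum) ∧ L.sum = 0 := by
  refine ⟨fun ⟨hpm, hpos, hsum⟩ => ⟨hpm, fun k => ?_, hsum⟩,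
    fun ⟨hpm, hpos, hsum⟩ => ⟨hpm, fun k _ _ => hpos k, hsum⟩⟩
  rcases Nat.eq_zero_or_pos k with rfl | hk
  · simp
  rcases le_or_gt L.length k with hkL | hkL
  · rw [List.take_of_length_le hkL, hsum]
  · exact hpos k hk (by omega)

lemma id_one_iff (L : List ℤ) :
    ID 1 L ↔ isPM1 L ∧ (∀ k < L.length, 0 ≤ (L.take k).sum) ∧ L.sum = -1 := by
  refine ⟨fun ⟨hpm, hpos, hsum⟩ => ⟨hpm, fun k hk => ?_, by simpa using hsum⟩,
    fun ⟨hpm, hpos, hsum⟩ => ⟨hpm, fun k _ hk => ?_, by simpa using hsum⟩⟩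
  · rcases Nat.eq_zero_or_pos k with rfl | hk0
    · simp
    · simpa using hpos k hk0 (by omega)
  · simpa using hpos k (by omega)

lemma neg_one_le_sum_take_of_id_one {M : List ℤ} (hM : ID 1 M) (k : ℕ) :
    -1 ≤ (M.take k).sum := by
  obtain ⟨-, hpos, hsum⟩ := (id_one_iff M).mp hM
  rcases lt_or_ge k M.length with hk | hk
  · linarith [hpos k hk]
  · rw [List.take_of_length_le hk, hsum]

lemma iFlat_nil : IFlat [] :=
  (iFlat_iff []).mpr ⟨by simp [isPM1], by simp, rfl⟩

lemma iFlat_zero_cons_iff (L : List ℤ) : IFlat (0 :: L) ↔ IFlat L := by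
  simp only [iFlat_iff, isPM1, List.forall_mem_cons, List.sum_cons, zero_add]
  refine ⟨fun ⟨⟨_, hpm⟩, hpos, hsum⟩ => ⟨hpm, fun k => ?_, hsum⟩,
    fun ⟨hpm, hpos, hsum⟩ => ⟨⟨by norm_num, hpm⟩, fun k => ?_, hsum⟩⟩
  · simpa using hpos (k + 1)
  · cases k <;> simp [hpos]

lemma iFlat_one_cons_append {M L : List ℤ} (hM : ID 1 M) (hL : IFlat L) :
    IFlat (1 :: (M ++ L)) := by
  obtain ⟨hpmM, -, hsumM⟩ := (id_one_iff M).mp hM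
  obtain ⟨hpmL, hposL, hsumL⟩ := (iFlat_iff L).mp hL
  refine (iFlat_iff _).mpr ⟨?_, fun k => ?_, by simp [hsumM, hsumL]⟩
  · simp only [isPM1, List.forall_mem_cons, List.mem_append]
    exact ⟨by norm_num, fun x hx => hx.elim (hpmM x) (hpmL x)⟩
  cases k with
  | zero => simp
  | succ k =>
    suffices -1 ≤ ((M ++ L).take k).sum by simp only [List.take_succ_cons, List.sum_cons]; omega
    rcases le_or_gt k M.length with hk | hk
    · rw [List.take_append_of_le_length hk]
      exact neg_one_le_sum_take_of_id_one hM k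
    · obtain ⟨n, rfl⟩ := Nat.exists_eq_add_of_lt hk
      rw [List.take_append, List.take_of_length_le (by omega), List.sum_append, hsumM]
      linarith [hposL (M.length + n + 1 - M.length)]

lemma eq_zero_or_eq_one_of_iFlat_cons {x : ℤ} {L : List ℤ} (h : IFlat (x :: L)) :
    x = 0 ∨ x = 1 := by
  obtain ⟨hpm, hpos, -⟩ := (iFlat_iff _).mp h
  have := hpos 1
  simp only [List.take_succ_cons, List.take_zero, List.sum_cons, List.sum_nil] at this
  rcases hpm x List.mem_cons_self with h | h | h <;> omega

lemma exists_id_one_append_of_iFlat_one_cons {T : List ℤ} (h : IFlat (1 :: T)) :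
    ∃ M L, ID 1 M ∧ IFlat L ∧ T = M ++ L := by
  obtain ⟨hpm, hpos, hsum⟩ := (iFlat_iff _).mp h
  have hT : ∀ k, -1 ≤ (T.take k).sum := fun k => by
    have := hpos (k + 1)
    simp only [List.take_succ_cons, List.sum_cons] at this
    omega
  simp only [List.sum_cons] at hsum
  have hex : ∃ k, (T.take k).sum = -1 := ⟨T.length, by rw [List.take_length]; omega⟩
  -- cut `T` at its first return to level `-1`
  let k₀ := Nat.find hex
  have hk₀ : (T.take k₀).sum = -1 := Nat.find_spec hex
  refine ⟨T.take k₀, T.drop k₀, (id_one_iff _).mpr ⟨?_, fun j hj => ?_, hk₀⟩,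
    (iFlat_iff _).mpr ⟨?_, fun j => ?_, ?_⟩, (List.take_append_drop k₀ T).symm⟩
  · exact fun x hx => hpm x (List.mem_cons_of_mem _ (List.mem_of_mem_take hx))
  · have hjk : j < k₀ := lt_of_lt_of_le hj (List.length_take_le _ _)
    rw [List.take_take, min_eq_left hjk.le]
    have := Nat.find_min hex hjk
    have := hT j
    omega
  · exact fun x hx => hpm x (List.mem_cons_of_mem _ (List.mem_of_mem_drop hx))
  · have := hT (k₀ + j)
    rw [List.take_add, List.sum_append, hk₀] at this
    linarith
  · have := List.sum_take_add_sum_drop T k₀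
    linarith

lemma eq_nil_of_id_one_append {M C : List ℤ} (h : ID 1 (M ++ C)) (hM : M.sum = -1) :
    C = [] := by
  by_contra hC
  have hlt : M.length < (M ++ C).length := by simp [List.length_pos_iff.mpr hC]
  have := ((id_one_iff _).mp h).2.1 M.length hlt
  rw [List.take_left, hM] at this
  omega

lemma eq_of_id_one_of_append_eq_append {M₁ M₂ L₁ L₂ : List ℤ} (h₁ : ID 1 M₁) (h₂ : ID 1 M₂)
    (h : M₁ ++ L₁ = M₂ ++ L₂) : M₁ = M₂ := by
  rcases List.append_eq_append_iff.mp h with ⟨C, rfl, -⟩ | ⟨C, rfl, -⟩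
  · rw [eq_nil_of_id_one_append h₂ ((id_one_iff _).mp h₁).2.2, List.append_nil]
  · rw [eq_nil_of_id_one_append h₁ ((id_one_iff _).mp h₂).2.2, List.append_nil]

def iFlatDecomp :
    Unit ⊕ ({L : List ℤ // IFlat L} ⊕ ({M : List ℤ // ID 1 M} × {L : List ℤ // IFlat L})) →
      {L : List ℤ // IFlat L}
  | .inl _ => ⟨[], iFlat_nil⟩
  | .inr (.inl L) => ⟨0 :: L.1, (iFlat_zero_cons_iff L.1).mpr L.2⟩
  | .inr (.inr (M, L)) => ⟨1 :: (M.1 ++ L.1), iFlat_one_cons_append M.2 L.2⟩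

lemma iFlatDecomp_bijective : Function.Bijective iFlatDecomp := by
  constructor
  · rintro (_ | L₁ | ⟨M₁, L₁⟩) (_ | L₂ | ⟨M₂, L₂⟩) h <;>
      simp only [iFlatDecomp, Subtype.mk.injEq, List.cons.injEq, reduceCtorEq, false_and,
        zero_ne_one, one_ne_zero, true_and] at h
    · rfl
    · rw [Subtype.ext h]
    · obtain rfl := Subtype.ext (eq_of_id_one_of_append_eq_append M₁.2 M₂.2 h)
      rw [Subtype.ext (List.append_cancel_left h)]
  · rintro ⟨_ | ⟨x, T⟩, hL⟩
    · exact ⟨.inl (), rfl⟩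
    rcases eq_zero_or_eq_one_of_iFlat_cons hL with rfl | rfl
    · exact ⟨.inr (.inl ⟨T, (iFlat_zero_cons_iff T).mp hL⟩), rfl⟩
    · obtain ⟨M, L, hM, hL', rfl⟩ := exists_id_one_append_of_iFlat_one_cons hL
      exact ⟨.inr (.inr (⟨M, hM⟩, ⟨L, hL'⟩)), rfl⟩

lemma pathSum_iFlat (Am1 A0 A1 : Mx) (i j : ℕ) :
    pathSum Am1 A0 A1 IFlat i j = (if i = j then 1 else 0)
      + (mprod A0 (pathSum Am1 A0 A1 IFlat) i j
        + mprod (mprod A1 (pathSum Am1 A0 A1 (ID 1))) (pathSum Am1 A0 A1 IFlat) i j) := by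
  calc pathSum Am1 A0 A1 IFlat i j
      = ∑' s, seqProd Am1 A0 A1 (iFlatDecomp s).1 i j :=
        ((Equiv.ofBijective _ iFlatDecomp_bijective).tsum_eq
          fun L : {L // IFlat L} => seqProd Am1 A0 A1 L.1 i j).symm
    _ = seqProd Am1 A0 A1 [] i j
        + (∑' L : {L // IFlat L}, mprod A0 (seqProd Am1 A0 A1 L.1) i j
          + ∑' p : {M // ID 1 M} × {L // IFlat L},
              mprod A1 (seqProd Am1 A0 A1 (p.1.1 ++ p.2.1)) i j) := by
        rw [ENNReal.summable.tsum_sum ENNReal.summable,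
          ENNReal.summable.tsum_sum ENNReal.summable]
        simp only [iFlatDecomp, tsum_fintype, Finset.univ_unique, Finset.sum_singleton,
          seqProd_zero_cons, seqProd_one_cons]
    _ = _ := by
        rw [← mprod_tsum, ← mprod_tsum, tsum_seqProd_append, mprod_assoc]
        rfl

theorem stmt7_general (Am1 A0 A1 : Mx)
    (N G : Mx)
    (hN : N = fun i j => ∑' L : {L : List ℤ // IFlat L}, seqProd Am1 A0 A1 L.1 i j)
    (hG : G = fun i j => ∑' L : {L : List ℤ // ID 1 L}, seqProd Am1 A0 A1 L.1 i j) :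
    ∀ i j, N i j = (if i = j then (1 : ℝ≥0∞) else 0) +
      mprod (fun a b => A0 a b + mprod A1 G a b) N i j := by
  intro i j
  subst hN hG
  rw [add_mprod]
  exact pathSum_iFlat Am1 A0 A1 i j

/-- `N` satisfies `N = I + (A₀ + A₁ G) N`, including the case where both sides
diverge (all arithmetic in `[0,∞]`). -/
theorem stmt7 (Am1 A0 A1 : Mx)
    (hfin : ∀ L : List ℤ, isPM1 L → ∀ i j, seqProd Am1 A0 A1 L i j ≠ ⊤)
    (N G : Mx)
    (hN : N = fun i j => ∑' L : {L : List ℤ // IFlat L}, seqProd Am1 A0 A1 L.1 i j)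
    (hG : G = fun i j => ∑' L : {L : List ℤ // ID 1 L}, seqProd Am1 A0 A1 L.1 i j) :
    ∀ i j, N i j = (if i = j then (1 : ℝ≥0∞) else 0) +
      mprod (fun a b => A0 a b + mprod A1 G a b) N i j :=
  stmt7_general Am1 A0 A1 N G hN hG
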